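/- Let G be a finitely generated group of rank n such that for every k ≥ n, every normally generating k-vector of G can be transformed into a generating k-vector of G by finitely many M-transformations. If the abelianization homomorphism π_ab : G → G/[G,G] is normally coessential, then π_ab is coessential. -/
import Mathlib


/-- An M-transformation on `n`-vectors. -/
def MStep {G : Type*} [Group G] {n : ℕ} (v w : Fin n → G) : Prop :=
  ∃ i : Fin n, (∀ j, j ≠ i → w j = v j) ∧
    ∃ u ∈ Subgroup.normalClosure (v '' {j | j ≠ i}), w i = v i * u

/-- M-steps are symmetric. -/
lemma MStep.symm {G : Type*} [Group G] {n : ℕ} {v w : Fin n → G} (h : MStep v w) :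
    MStep w v := by
  obtain ⟨i, hj, u, hu, hi⟩ := h
  refine ⟨i, fun j hji => (hj j hji).symm, u⁻¹, ?_, by rw [hi]; group⟩
  have himg : w '' {j | j ≠ i} = v '' {j | j ≠ i} := by
    apply Set.image_congr
    intro j hjmem
    exact hj j hjmem
  rw [himg]
  exact inv_mem hu

/-- M-steps push forward along surjective homomorphisms. -/
lemma MStep.map {G Q : Type*} [Group G] [Group Q] {n : ℕ} {v w : Fin n → G}
    (f : G →* Q) (hf : Function.Surjective f) (h : MStep v w) :
    MStep (f ∘ v) (f ∘ w) := by
  obtain ⟨i, hj, u, hu, hi⟩ := h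
  refine ⟨i, fun j hji => by simp [hj j hji], f u, ?_, by simp [hi]⟩
  have : (f ∘ v) '' {j | j ≠ i} = f '' (v '' {j | j ≠ i}) := by
    rw [Set.image_comp]
  rw [this, ← Subgroup.map_normalClosure _ f hf]
  exact ⟨u, hu, rfl⟩

/-- In a commutative group, the normal closure is the closure. -/
lemma normalClosure_eq_closure_comm {Q : Type*} [CommGroup Q] (s : Set Q) :
    Subgroup.normalClosure s = Subgroup.closure s :=
  le_antisymm (Subgroup.normalClosure_le_normal Subgroup.subset_closure)
    Subgroup.closure_le_normalClosure

/-- Lifting an M-step in a commutative quotient to a generation-preserving move. -/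
lemma lift_step {G Q : Type*} [Group G] [CommGroup Q] {k : ℕ}
    (f : G →* Q) (w : Fin k → G) (hw : Subgroup.closure (Set.range w) = ⊤)
    {q : Fin k → Q} (h : MStep (f ∘ w) q) :
    ∃ w' : Fin k → G, Subgroup.closure (Set.range w') = ⊤ ∧ f ∘ w' = q := by
  obtain ⟨i, hj, u, hu, hi⟩ := h
  rw [normalClosure_eq_closure_comm, Set.image_comp, ← MonoidHom.map_closure] at hu
  obtain ⟨t, ht, hft⟩ := hu
  set w' : Fin k → G := fun j => if j = i then w i * t else w j with hw'def
  refine ⟨w', ?_, ?_⟩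
  · have hsub : w '' {j | j ≠ i} ⊆ Set.range w' := by
      rintro x ⟨j, hjmem, rfl⟩
      exact ⟨j, by simp [hw'def, if_neg (hjmem : j ≠ i)]⟩
    have htmem : t ∈ Subgroup.closure (Set.range w') :=
      Subgroup.closure_mono hsub ht
    rw [eq_top_iff, ← hw, Subgroup.closure_le]
    rintro x ⟨j, rfl⟩
    by_cases hji : j = i
    · subst hji
      have h1 : w j * t ∈ Subgroup.closure (Set.range w') :=
        Subgroup.subset_closure ⟨j, by simp [hw'def]⟩
      have := mul_mem h1 (inv_mem htmem)
      simpa using this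
    · exact Subgroup.subset_closure ⟨j, by simp [hw'def, if_neg hji]⟩
  · funext j
    by_cases hji : j = i
    · subst hji
      simp [hw'def, hi, hft]
    · simp [hw'def, if_neg hji, hj j hji]

/-- Lifting a chain of M-steps. -/
lemma lift_chain {G Q : Type*} [Group G] [CommGroup Q] {k : ℕ}
    (f : G →* Q) {q₁ q₂ : Fin k → Q} (h : Relation.ReflTransGen MStep q₁ q₂) :
    ∀ w : Fin k → G, Subgroup.closure (Set.range w) = ⊤ → f ∘ w = q₁ →
      ∃ w' : Fin k → G, Subgroup.closure (Set.range w') = ⊤ ∧ f ∘ w' = q₂ := by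
  induction h with
  | refl => exact fun w hw hq => ⟨w, hw, hq⟩
  | tail _ hstep ih =>
      intro w hw hq
      obtain ⟨w', hw', hq'⟩ := ih w hw hq
      exact lift_step f w' hw' (hq' ▸ hstep)

lemma chain_map {G Q : Type*} [Group G] [Group Q] {k : ℕ} {v w : Fin k → G}
    (f : G →* Q) (hf : Function.Surjective f) (h : Relation.ReflTransGen MStep v w) :
    Relation.ReflTransGen MStep (f ∘ v) (f ∘ w) := by
  induction h with
  | refl => exact Relation.ReflTransGen.refl
  | tail _ hstep ih => exact ih.tail (hstep.map f hf)

lemma chain_symm {G : Type*} [Group G] {k : ℕ} {v w : Fin k → G}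
    (h : Relation.ReflTransGen MStep v w) : Relation.ReflTransGen MStep w v := by
  induction h with
  | refl => exact Relation.ReflTransGen.refl
  | tail _ hstep ih => exact Relation.ReflTransGen.head hstep.symm ih

lemma abelianization_of_surjective {G : Type*} [Group G] :
    Function.Surjective (Abelianization.of (G := G)) :=
  fun x => Quotient.inductionOn x fun g => ⟨g, rfl⟩

/-- let `G` be a finitely generated group of rank `n` such that for every
`k ≥ n`, every normally generating `k`-vector of `G` transforms into a generating
`k`-vector by finitely many M-transformations. If the abelianization homomorphism is
normally coessential, then it is coessential. -/
theorem coessential_of_normally_coessential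
    {G : Type*} [Group G] [Group.FG G] {n : ℕ} (hn : Group.rank G = n)
    (hM : ∀ k : ℕ, n ≤ k → ∀ v : Fin k → G, Subgroup.normalClosure (Set.range v) = ⊤ →
      ∃ w : Fin k → G, Relation.ReflTransGen MStep v w ∧
        Subgroup.closure (Set.range w) = ⊤)
    (hnc : ∀ k : ℕ, ∀ q : Fin k → Abelianization G,
      Subgroup.normalClosure (Set.range q) = ⊤ →
      ∃ g : Fin k → G, Subgroup.normalClosure (Set.range g) = ⊤ ∧
        ∀ i, Abelianization.of (g i) = q i) :
    ∀ k : ℕ, Group.rank G ≤ k → ∀ q : Fin k → Abelianization G,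
      Subgroup.closure (Set.range q) = ⊤ →
      ∃ g : Fin k → G, Subgroup.closure (Set.range g) = ⊤ ∧
        ∀ i, Abelianization.of (g i) = q i := by
  intro k hk q hq
  -- q normally generates
  have hqn : Subgroup.normalClosure (Set.range q) = ⊤ := by
    rw [eq_top_iff, ← hq]
    exact Subgroup.closure_le_normalClosure
  obtain ⟨g, hg, hgq⟩ := hnc k q hqn
  obtain ⟨w, hchain, hw⟩ := hM k (hn ▸ hk) g hg
  -- push the chain down to the abelianization
  have hchainQ : Relation.ReflTransGen MStep
      ((Abelianization.of : G →* Abelianization G) ∘ g)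
      ((Abelianization.of : G →* Abelianization G) ∘ w) :=
    chain_map _ abelianization_of_surjective hchain
  have hgq' : (Abelianization.of : G →* Abelianization G) ∘ g = q := funext hgq
  have hback := chain_symm hchainQ
  rw [hgq'] at hback
  obtain ⟨w', hw', hq'⟩ := lift_chain (Abelianization.of : G →* Abelianization G)
    hback w hw rfl
  exact ⟨w', hw', fun i => congrFun hq' i⟩
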